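/- arXiv:1802.00971 — 2 statements merged into one kernel-verified Lean document; each statement's English description precedes it below -/
import Mathlib

section
/- Tail-sum power-law bound: let p·γ − β < −1 with β, γ > 0 and suppose |L(q)| ≤ |q|^γ and Φ(q) ≤ |q|^{−β} for |q| ≥ q₀. Then for fixed k and all sufficiently large λ, Σ_{n≠0} |L(k + 2πnλ/Δx₀)|^p · Φ(k + 2πnλ/Δx₀) ≤ C' · λ^{pγ−β} for a constant C' depending only on p, γ, β, Δx₀, k; i.e. the Brillouin tail of the numerator of the IFD symbol is O(Δx^{β−pγ}) as Δx = Δx₀/λ → 0. -/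
open Real

/-- Tail-sum power-law bound: if `pγ − β < −1` with `β, γ > 0`,
`|L(q)| ≤ |q|^γ` and `0 ≤ Φ(q) ≤ |q|^{−β}` for `|q| ≥ q₀`, then for fixed `k`
and all sufficiently large `λ` the Brillouin tail
`Σ_{n≠0} |L(k + 2πnλ/Δx₀)|^p Φ(k + 2πnλ/Δx₀)` is bounded by `C'·λ^{pγ−β}` for
a constant `C'` independent of `λ`; i.e. it is `O(Δx^{β−pγ})` for
`Δx = Δx₀/λ`. -/
theorem brillouin_tail_power_law_bound
    (k Δx₀ : ℝ) (hΔx₀ : 0 < Δx₀)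
    (L Φ : ℝ → ℝ) (hΦnn : ∀ q, 0 ≤ Φ q)
    (β γ : ℝ) (hβ : 0 < β) (hγ : 0 < γ) (p : ℕ)
    (hpγβ : (p : ℝ) * γ - β < -1)
    (q₀ : ℝ)
    (hL : ∀ q : ℝ, q₀ ≤ |q| → |L q| ≤ |q| ^ γ)
    (hΦ : ∀ q : ℝ, q₀ ≤ |q| → Φ q ≤ |q| ^ (-β)) :
    ∃ C' : ℝ, 0 < C' ∧ ∃ Λ : ℕ, ∀ lam : ℕ, Λ ≤ lam →
      (∑' n : {n : ℤ // n ≠ 0},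
          |L (k + 2 * π * (n : ℤ) * lam / Δx₀)| ^ p
            * Φ (k + 2 * π * (n : ℤ) * lam / Δx₀))
        ≤ C' * (lam : ℝ) ^ ((p : ℝ) * γ - β) := by
  have hπ : (0:ℝ) < π := Real.pi_pos
  set e : ℝ := (p : ℝ) * γ - β with he
  have he0 : e < 0 := by simp only [he]; linarith
  -- summable majorant over ℤ
  have hS : Summable (fun n : ℤ => |(n:ℝ)| ^ e) := by
    have h1 : (1:ℝ) < -e := by linarith
    simpa using Real.summable_abs_int_rpow h1
  set S : ℝ := ∑' n : ℤ, |(n:ℝ)| ^ e with hSdef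
  have hSnn : 0 ≤ S := tsum_nonneg fun n => Real.rpow_nonneg (abs_nonneg _) _
  have hCpos : 0 < (π / Δx₀) ^ e * (S + 1) := by positivity
  refine ⟨(π / Δx₀) ^ e * (S + 1), hCpos, ?_⟩
  set M0 : ℝ := max (max q₀ |k|) 1 with hM0def
  refine ⟨⌈Δx₀ * M0 / π⌉₊ + 1, fun lam hlam => ?_⟩
  have hlam1 : (1:ℝ) ≤ (lam : ℝ) := by
    have : 1 ≤ lam := le_trans (Nat.le_add_left 1 _) hlam
    exact_mod_cast this
  have hlampos : (0:ℝ) < lam := lt_of_lt_of_le one_pos hlam1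
  -- the scale M = π * lam / Δx₀ dominates M0
  set M : ℝ := π * lam / Δx₀ with hMdef
  have hMpos : 0 < M := by positivity
  have hM0M : M0 ≤ M := by
    have h1 : Δx₀ * M0 / π ≤ (⌈Δx₀ * M0 / π⌉₊ : ℝ) := Nat.le_ceil _
    have h2 : ((⌈Δx₀ * M0 / π⌉₊ : ℕ) : ℝ) ≤ (lam : ℝ) := by
      exact_mod_cast le_trans (Nat.le_add_right _ 1) hlam
    have h3 : Δx₀ * M0 / π ≤ (lam : ℝ) := le_trans h1 h2
    rw [div_le_iff₀ hπ] at h3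
    rw [hMdef, le_div_iff₀ hΔx₀]
    nlinarith
  have hM1 : 1 ≤ M := le_trans (le_max_right _ _) hM0M
  have hq₀M : q₀ ≤ M := le_trans (le_trans (le_max_left _ _) (le_max_left _ _)) hM0M
  have hkM : |k| ≤ M := le_trans (le_trans (le_max_right _ _) (le_max_left _ _)) hM0M
  -- pointwise lower bound on |q n|
  have hq : ∀ n : ℤ, n ≠ 0 → M * |(n:ℝ)| ≤ |k + 2 * π * (n:ℝ) * lam / Δx₀| := by
    intro n hn
    have hn1 : (1:ℝ) ≤ |(n:ℝ)| := by
      have := Int.one_le_abs hn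
      calc (1:ℝ) ≤ (|n| : ℤ) := by exact_mod_cast this
        _ = |(n:ℝ)| := by push_cast [Int.cast_abs]; ring_nf
    have habs : |2 * π * (n:ℝ) * lam / Δx₀| = 2 * M * |(n:ℝ)| := by
      rw [abs_div, abs_of_pos hΔx₀, abs_mul, abs_mul, abs_of_pos (by positivity : (0:ℝ) < 2 * π),
        abs_of_pos hlampos, hMdef]
      ring
    have htri : |2 * π * (n:ℝ) * lam / Δx₀| - |k| ≤ |k + 2 * π * (n:ℝ) * lam / Δx₀| := by
      have := abs_add_le k (2 * π * (n:ℝ) * lam / Δx₀)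
      have h2 := abs_sub_abs_le_abs_sub (2 * π * (n:ℝ) * lam / Δx₀) (-k)
      simp only [sub_neg_eq_add, abs_neg] at h2
      calc |2 * π * (n:ℝ) * lam / Δx₀| - |k|
          ≤ |2 * π * (n:ℝ) * lam / Δx₀ + k| := h2
        _ = |k + 2 * π * (n:ℝ) * lam / Δx₀| := by rw [add_comm]
    rw [habs] at htri
    have hMn : M ≤ M * |(n:ℝ)| := le_mul_of_one_le_right hMpos.le hn1
    nlinarith
  -- pointwise bound on summand
  set f : {n : ℤ // n ≠ 0} → ℝ := fun n =>
    |L (k + 2 * π * ((n:ℤ):ℝ) * lam / Δx₀)| ^ p * Φ (k + 2 * π * ((n:ℤ):ℝ) * lam / Δx₀) with hf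
  set g : {n : ℤ // n ≠ 0} → ℝ := fun n => (π / Δx₀) ^ e * (lam:ℝ) ^ e * |((n:ℤ):ℝ)| ^ e with hg
  have hfnn : ∀ n, 0 ≤ f n := fun n => mul_nonneg (pow_nonneg (abs_nonneg _) _) (hΦnn _)
  have hfg : ∀ n, f n ≤ g n := by
    rintro ⟨n, hn⟩
    simp only [hf, hg]
    set q : ℝ := k + 2 * π * (n:ℝ) * lam / Δx₀ with hqdef
    have hqlb : M * |(n:ℝ)| ≤ |q| := hq n hn
    have hn1 : (1:ℝ) ≤ |(n:ℝ)| := by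
      have := Int.one_le_abs hn
      calc (1:ℝ) ≤ (|n| : ℤ) := by exact_mod_cast this
        _ = |(n:ℝ)| := by push_cast [Int.cast_abs]; ring_nf
    have hMn : (0:ℝ) < M * |(n:ℝ)| := by positivity
    have hqpos : (0:ℝ) < |q| := lt_of_lt_of_le hMn hqlb
    have hq₀q : q₀ ≤ |q| := le_trans hq₀M (le_trans (le_mul_of_one_le_right hMpos.le hn1) hqlb)
    have hLq : |L q| ^ p ≤ (|q| ^ γ) ^ p :=
      pow_le_pow_left₀ (abs_nonneg _) (hL q hq₀q) p
    have hstep : |L q| ^ p * Φ q ≤ (|q| ^ γ) ^ p * |q| ^ (-β) :=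
      mul_le_mul hLq (hΦ q hq₀q) (hΦnn q) (by positivity)
    have hrw : (|q| ^ γ) ^ p * |q| ^ (-β) = |q| ^ e := by
      rw [← Real.rpow_natCast (|q| ^ γ) p, ← Real.rpow_mul (abs_nonneg q),
        ← Real.rpow_add hqpos]
      ring_nf
      rw [he]; ring_nf
    have hmono : |q| ^ e ≤ (M * |(n:ℝ)|) ^ e :=
      Real.rpow_le_rpow_of_nonpos hMn hqlb he0.le
    have hsplit : (M * |(n:ℝ)|) ^ e = (π / Δx₀) ^ e * (lam:ℝ) ^ e * |(n:ℝ)| ^ e := by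
      have hMeq : M = (π / Δx₀) * lam := by rw [hMdef]; ring
      rw [hMeq, Real.mul_rpow (by positivity) (abs_nonneg _),
        Real.mul_rpow (by positivity) hlampos.le]
    calc |L q| ^ p * Φ q ≤ (|q| ^ γ) ^ p * |q| ^ (-β) := hstep
      _ = |q| ^ e := hrw
      _ ≤ (M * |(n:ℝ)|) ^ e := hmono
      _ = (π / Δx₀) ^ e * (lam:ℝ) ^ e * |(n:ℝ)| ^ e := hsplit
  have hgsum : Summable g := ((hS.subtype _).mul_left _)
  have hfsum : Summable f := Summable.of_nonneg_of_le hfnn hfg hgsum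
  have h1 : ∑' n, f n ≤ ∑' n, g n := Summable.tsum_le_tsum hfg hfsum hgsum
  have h2 : ∑' n, g n = (π / Δx₀) ^ e * (lam:ℝ) ^ e * ∑' n : {n : ℤ // n ≠ 0}, |((n:ℤ):ℝ)| ^ e :=
    tsum_mul_left
  have h3 : (∑' n : {n : ℤ // n ≠ 0}, |((n:ℤ):ℝ)| ^ e) ≤ S :=
    Summable.tsum_subtype_le (fun n : ℤ => |(n:ℝ)| ^ e) _
      (fun n => Real.rpow_nonneg (abs_nonneg _) _) hS
  have h4 : ∑' n, g n ≤ (π / Δx₀) ^ e * (S + 1) * (lam:ℝ) ^ e := by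
    rw [h2]
    have hc : (0:ℝ) ≤ (π / Δx₀) ^ e * (lam:ℝ) ^ e := by positivity
    nlinarith [Real.rpow_pos_of_pos (div_pos hπ hΔx₀) e, Real.rpow_pos_of_pos hlampos e]
  exact le_trans h1 (le_trans h4 (le_of_eq rfl))
end

section
/- One-step error scaling of linear translation-invariant IFD: under the hypotheses that |L(q)| ≤ |q|^γ, Φ(q) ≤ |q|^{−β} for large |q| with β − αγ > 1, |B̂| ≤ C, B̂ continuous at 0 with B̂(0) ≠ 0, and Ū(q) = Σ_{p=0}^α (Δt L(q))^p / p!, the Fourier-space one-step error satisfies |T_λ(k) − Ū(k)| ≤ Σ_{p=0}^α C_p Δt^p (Δx₀/λ)^{β − pγ} for constants C_p independent of λ and Δt, for all sufficiently large λ. -/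
open Real

private theorem ifd_aux_summable {E : Type*} [NormedAddCommGroup E] [CompleteSpace E]
    {f : ℤ → E} {g : ℤ → ℝ} (hg : Summable g) (hg0 : ∀ n, 0 ≤ g n)
    (h : ∀ n : ℤ, n ≠ 0 → ‖f n‖ ≤ g n) : Summable f := by
  have h1 : Summable (fun n : ℤ => if n = 0 then 0 else f n) := by
    refine Summable.of_norm_bounded hg ?_
    intro n
    by_cases hn : n = 0
    · simp [hn, hg0 0]
    · simpa [hn] using h n hn
  have h2 : Summable (fun n : ℤ => if n = 0 then f n else 0) := by
    refine summable_of_ne_finset_zero (s := {0}) ?_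
    intro n hn
    simp only [Finset.mem_singleton] at hn
    simp [hn]
  refine (h1.add h2).congr ?_
  intro n
  by_cases hn : n = 0 <;> simp [hn]

set_option maxHeartbeats 1000000 in
/-- One-step error scaling of linear translation-invariant IFD: with
`‖L(q)‖ ≤ |q|^γ` and `0 < Φ(q) ≤ |q|^{−β}` for large `|q|`, `β − αγ > 1`,
`‖B̂‖ ≤ C`, `B̂` continuous at `0` with `B̂(0) ≠ 0`, and the truncated time
evolution `Ū(q) = Σ_{p=0}^α (Δt L(q))^p / p!`, the Fourier-space one-step
error of the IFD symbol `T_λ(k)` at resolution `Δx = Δx₀/λ` satisfies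
`|T_λ(k) − Ū(k)| ≤ Σ_{p=0}^α C_p Δt^p (Δx₀/λ)^{β − pγ}` for constants `C_p`
independent of `λ` and `Δt`, for all sufficiently large `λ`. -/
theorem ifd_one_step_error_scaling
    (k Δx₀ : ℝ) (hΔx₀ : 0 < Δx₀) (α : ℕ)
    (L : ℝ → ℂ) (Φ : ℝ → ℝ) (Bh : ℝ → ℂ)
    (β γ : ℝ) (hβ : 0 < β) (hγ : 0 < γ) (hβαγ : 1 < β - α * γ)
    (q₀ : ℝ)
    (hL : ∀ q : ℝ, q₀ ≤ |q| → ‖L q‖ ≤ |q| ^ γ)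
    (hΦpos : ∀ q, 0 < Φ q)
    (hΦ : ∀ q : ℝ, q₀ ≤ |q| → Φ q ≤ |q| ^ (-β))
    (C : ℝ) (hBbd : ∀ q, ‖Bh q‖ ≤ C)
    (hBcont : ContinuousAt Bh 0) (hB0 : Bh 0 ≠ 0)
    (Ubar : ℝ → ℝ → ℂ)
    (hUbar : ∀ Δt q, Ubar Δt q =
      ∑ p ∈ Finset.range (α + 1), ((Δt : ℂ) * L q) ^ p / (Nat.factorial p))
    (T : ℝ → ℕ → ℂ)
    (hT : ∀ Δt : ℝ, ∀ lam : ℕ, T Δt lam =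
      (∑' n : ℤ, Ubar Δt (k + 2 * π * n * lam / Δx₀)
          * ((Φ (k + 2 * π * n * lam / Δx₀)
              * ‖Bh (k / lam + 2 * π * n / Δx₀)‖ ^ 2 : ℝ) : ℂ))
        / (∑' m : ℤ, ((Φ (k + 2 * π * m * lam / Δx₀)
              * ‖Bh (k / lam + 2 * π * m / Δx₀)‖ ^ 2 : ℝ) : ℂ))) :
    ∃ Cp : ℕ → ℝ, (∀ p, 0 < Cp p) ∧ ∃ Λ : ℕ, ∀ Δt : ℝ, 0 < Δt →
      ∀ lam : ℕ, Λ ≤ lam →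
        ‖T Δt lam - Ubar Δt k‖
          ≤ ∑ p ∈ Finset.range (α + 1),
              Cp p * Δt ^ p * (Δx₀ / lam) ^ (β - p * γ) := by
  have hπ0 : (0:ℝ) < π := Real.pi_pos
  have hπ1 : (1:ℝ) ≤ π := by linarith [Real.pi_gt_three]
  have hB0' : 0 < ‖Bh 0‖ := norm_pos_iff.mpr hB0
  have hC : 0 < C := lt_of_lt_of_le hB0' (hBbd 0)
  set b : ℝ := ‖Bh 0‖ / 2 with hbdef
  have hb : 0 < b := by positivity
  obtain ⟨δ, hδ0, hδB⟩ : ∃ δ > 0, ∀ x : ℝ, |x| < δ → b ≤ ‖Bh x‖ := by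
    obtain ⟨δ, hδ0, h⟩ := Metric.continuousAt_iff.mp hBcont b hb
    refine ⟨δ, hδ0, fun x hx => ?_⟩
    have hx' : dist x 0 < δ := by simpa [Real.dist_eq] using hx
    have h1 := h hx'
    rw [dist_eq_norm] at h1
    have h2 : ‖Bh 0‖ - ‖Bh x‖ ≤ ‖Bh x - Bh 0‖ := by
      have h3 := norm_sub_norm_le (Bh 0) (Bh x)
      rwa [norm_sub_rev] at h3
    rw [hbdef] at h1 ⊢
    linarith
  -- exponent arithmetic
  have hαγβ : (α : ℝ) * γ ≤ β - 1 := by linarith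
  -- summable majorant over ℤ
  set g : ℤ → ℝ := fun n => |(n:ℝ)| ^ ((α:ℝ) * γ - β) with hgdef
  have hgsum : Summable g := by
    have h := Real.summable_abs_int_rpow hβαγ
    simpa [hgdef, neg_sub] using h
  have hg0 : ∀ n, 0 ≤ g n := fun n => Real.rpow_nonneg (abs_nonneg _) _
  have hgz : g 0 = 0 := by
    have : ((α:ℝ) * γ - β) ≠ 0 := by
      have : (0:ℝ) ≤ (α:ℝ) * γ := by positivity
      intro h; nlinarith
    simp [hgdef, Real.zero_rpow this]
  set S : ℝ := ∑' n, g n with hSdef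
  have hS1 : (1:ℝ) ≤ S := by
    have h := Summable.le_tsum hgsum 1 (fun j _ => hg0 j)
    simpa [hgdef] using h
  have hSpos : (0:ℝ) < S := lt_of_lt_of_le one_pos hS1
  set M : ℝ := ‖L k‖ with hMdef
  have hM0 : (0:ℝ) ≤ M := norm_nonneg _
  set D₀ : ℝ := Φ k * b ^ 2 with hD₀def
  have hD₀ : 0 < D₀ := by have := hΦpos k; positivity
  refine ⟨fun p => C ^ 2 * (1 + M ^ p) / (Nat.factorial p) * S / D₀, fun p => ?_, ?_⟩
  · have hf : (0:ℝ) < (Nat.factorial p : ℝ) := by exact_mod_cast Nat.factorial_pos p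
    have h1 : (0:ℝ) < C ^ 2 * (1 + M ^ p) := by positivity
    exact div_pos (mul_pos (div_pos h1 hf) hSpos) hD₀
  set R : ℝ := max (max Δx₀ (|k| / δ)) (Δx₀ * max (max q₀ |k|) 1 / π) with hRdef
  refine ⟨⌈R⌉₊ + 1, ?_⟩
  intro Δt hΔt lam hlam
  set l : ℝ := (lam : ℝ) with hldef
  have hlR : R < l := by
    have h1 : R ≤ (⌈R⌉₊ : ℝ) := Nat.le_ceil R
    have h2 : ((⌈R⌉₊ + 1 : ℕ) : ℝ) ≤ l := by rw [hldef]; exact_mod_cast hlam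
    push_cast at h2
    linarith
  have hΔl : Δx₀ < l := lt_of_le_of_lt (le_trans (le_max_left _ _) (le_max_left _ _)) hlR
  have hl0 : (0:ℝ) < l := lt_trans hΔx₀ hΔl
  have hx1 : Δx₀ / l ≤ 1 := by rw [div_le_one hl0]; linarith
  have hx0 : (0:ℝ) < Δx₀ / l := div_pos hΔx₀ hl0
  have hkl : |k / l| < δ := by
    have h1 : |k| / δ < l := lt_of_le_of_lt (le_trans (le_max_right _ _) (le_max_left _ _)) hlR
    rw [abs_div, abs_of_pos hl0, div_lt_iff₀ hl0]
    have h2 : |k| < l * δ := by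
      rw [div_lt_iff₀ hδ0] at h1; linarith
    linarith
  set r : ℝ := π * l / Δx₀ with hrdef
  have hr0 : (0:ℝ) < r := by positivity
  have hrmax : max (max q₀ |k|) 1 ≤ r := by
    have h1 : Δx₀ * max (max q₀ |k|) 1 / π < l :=
      lt_of_le_of_lt (le_max_right _ _) hlR
    rw [div_lt_iff₀ hπ0] at h1
    rw [hrdef, le_div_iff₀ hΔx₀]
    nlinarith
  have hr1 : (1:ℝ) ≤ r := le_trans (le_max_right _ _) hrmax
  have hrq₀ : q₀ ≤ r := le_trans (le_trans (le_max_left _ _) (le_max_left _ _)) hrmax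
  have hrk : |k| ≤ r := le_trans (le_trans (le_max_right _ _) (le_max_left _ _)) hrmax
  have hrl : l / Δx₀ ≤ r := by
    rw [hrdef]
    gcongr
    nlinarith
  have hlΔ0 : (0:ℝ) < l / Δx₀ := div_pos hl0 hΔx₀
  -- the lattice points and weights
  set q : ℤ → ℝ := fun n => k + 2 * π * (n:ℝ) * l / Δx₀ with hqdef
  set w : ℤ → ℝ := fun n => Φ (q n) * ‖Bh (k / l + 2 * π * (n:ℝ) / Δx₀)‖ ^ 2 with hwdef
  have hw_nonneg : ∀ n, 0 ≤ w n := by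
    intro n
    have := (hΦpos (q n)).le
    positivity
  have hq0 : q 0 = k := by simp [hqdef]
  have hw0 : D₀ ≤ w 0 := by
    have harg : k / l + 2 * π * ((0:ℤ):ℝ) / Δx₀ = k / l := by push_cast; ring
    have hBk : b ≤ ‖Bh (k / l)‖ := hδB _ hkl
    have hb2 : b ^ 2 ≤ ‖Bh (k / l)‖ ^ 2 := pow_le_pow_left₀ hb.le hBk 2
    rw [hwdef]
    simp only [harg, hq0]
    exact mul_le_mul_of_nonneg_left hb2 (hΦpos k).le
  -- lower bound for |q n|
  have hqlb : ∀ n : ℤ, n ≠ 0 → r * |(n:ℝ)| ≤ |q n| := by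
    intro n hn
    have h1 : (1:ℝ) ≤ |(n:ℝ)| := by
      have := Int.one_le_abs hn
      calc (1:ℝ) ≤ (|n| : ℤ) := by exact_mod_cast this
        _ = |(n:ℝ)| := by push_cast; ring
    have hy : |q n - k| = 2 * r * |(n:ℝ)| := by
      have h2 : q n - k = 2 * π * (n:ℝ) * l / Δx₀ := by rw [hqdef]; ring
      rw [h2, hrdef, abs_div, abs_of_pos hΔx₀, abs_mul, abs_mul, abs_mul,
        abs_of_pos hπ0, abs_of_pos hl0]
      rw [abs_of_nonneg (by norm_num : (0:ℝ) ≤ 2)]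
      ring
    have h3 : |q n - k| ≤ |q n| + |k| := abs_sub (q n) k
    have h4 : |k| ≤ r * |(n:ℝ)| := by
      calc |k| ≤ r := hrk
        _ = r * 1 := (mul_one r).symm
        _ ≤ r * |(n:ℝ)| := mul_le_mul_of_nonneg_left h1 hr0.le
    linarith
  have hq1 : ∀ n : ℤ, n ≠ 0 → (1:ℝ) ≤ |q n| := by
    intro n hn
    have h1 : (1:ℝ) ≤ |(n:ℝ)| := by
      have := Int.one_le_abs hn
      calc (1:ℝ) ≤ (|n| : ℤ) := by exact_mod_cast this
        _ = |(n:ℝ)| := by push_cast; ring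
    calc (1:ℝ) ≤ r * 1 := by linarith [hr1]
      _ ≤ r * |(n:ℝ)| := mul_le_mul_of_nonneg_left h1 hr0.le
      _ ≤ |q n| := hqlb n hn
  have hqq₀ : ∀ n : ℤ, n ≠ 0 → q₀ ≤ |q n| := by
    intro n hn
    have h1 : (1:ℝ) ≤ |(n:ℝ)| := by
      have := Int.one_le_abs hn
      calc (1:ℝ) ≤ (|n| : ℤ) := by exact_mod_cast this
        _ = |(n:ℝ)| := by push_cast; ring
    calc q₀ ≤ r := hrq₀
      _ = r * 1 := (mul_one r).symm
      _ ≤ r * |(n:ℝ)| := mul_le_mul_of_nonneg_left h1 hr0.le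
      _ ≤ |q n| := hqlb n hn
  have hqpos : ∀ n : ℤ, n ≠ 0 → (0:ℝ) < |q n| := fun n hn =>
    lt_of_lt_of_le one_pos (hq1 n hn)
  -- key rpow comparisons
  have hXg : ∀ n : ℤ, n ≠ 0 → ∀ p : ℕ, p ≤ α →
      |q n| ^ ((p:ℝ) * γ - β) ≤ (Δx₀ / l) ^ (β - (p:ℝ) * γ) * g n := by
    intro n hn p hp
    have h1n : (1:ℝ) ≤ |(n:ℝ)| := by
      have := Int.one_le_abs hn
      calc (1:ℝ) ≤ (|n| : ℤ) := by exact_mod_cast this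
        _ = |(n:ℝ)| := by push_cast; ring
    have hpγ : (p:ℝ) * γ ≤ (α:ℝ) * γ := by
      have : (p:ℝ) ≤ (α:ℝ) := by exact_mod_cast hp
      nlinarith
    have hexp : (p:ℝ) * γ - β ≤ 0 := by nlinarith
    have hrn0 : (0:ℝ) < r * |(n:ℝ)| := by positivity
    have e1 : |q n| ^ ((p:ℝ) * γ - β) ≤ (r * |(n:ℝ)|) ^ ((p:ℝ) * γ - β) :=
      Real.rpow_le_rpow_of_nonpos hrn0 (hqlb n hn) hexp
    have e2 : (r * |(n:ℝ)|) ^ ((p:ℝ) * γ - β)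
        = r ^ ((p:ℝ) * γ - β) * |(n:ℝ)| ^ ((p:ℝ) * γ - β) :=
      Real.mul_rpow hr0.le (abs_nonneg _)
    have e3 : r ^ ((p:ℝ) * γ - β) ≤ (l / Δx₀) ^ ((p:ℝ) * γ - β) :=
      Real.rpow_le_rpow_of_nonpos hlΔ0 hrl hexp
    have e4 : (l / Δx₀) ^ ((p:ℝ) * γ - β) = (Δx₀ / l) ^ (β - (p:ℝ) * γ) := by
      rw [show (p:ℝ) * γ - β = -(β - (p:ℝ) * γ) by ring, Real.rpow_neg hlΔ0.le,
        show Δx₀ / l = (l / Δx₀)⁻¹ by field_simp, Real.inv_rpow hlΔ0.le]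
    have e5 : |(n:ℝ)| ^ ((p:ℝ) * γ - β) ≤ |(n:ℝ)| ^ ((α:ℝ) * γ - β) :=
      Real.rpow_le_rpow_of_exponent_le h1n (by linarith)
    have e3' : r ^ ((p:ℝ) * γ - β) ≤ (Δx₀ / l) ^ (β - (p:ℝ) * γ) := e4 ▸ e3
    calc |q n| ^ ((p:ℝ) * γ - β)
        ≤ (r * |(n:ℝ)|) ^ ((p:ℝ) * γ - β) := e1
      _ = r ^ ((p:ℝ) * γ - β) * |(n:ℝ)| ^ ((p:ℝ) * γ - β) := e2
      _ ≤ (Δx₀ / l) ^ (β - (p:ℝ) * γ) * g n :=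
          mul_le_mul e3' e5 (Real.rpow_nonneg (abs_nonneg _) _)
            (Real.rpow_nonneg (div_pos hΔx₀ hl0).le _)
  have hXg0 : ∀ n : ℤ, n ≠ 0 → ∀ p : ℕ, p ≤ α →
      |q n| ^ (-β) ≤ (Δx₀ / l) ^ (β - (p:ℝ) * γ) * g n := by
    intro n hn p hp
    have h1 : |q n| ^ (-β) ≤ |q n| ^ ((p:ℝ) * γ - β) := by
      apply Real.rpow_le_rpow_of_exponent_le (hq1 n hn)
      have : (0:ℝ) ≤ (p:ℝ) * γ := by positivity
      linarith
    exact h1.trans (hXg n hn p hp)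
  -- weight bound
  have hwb : ∀ n : ℤ, n ≠ 0 → w n ≤ C ^ 2 * |q n| ^ (-β) := by
    intro n hn
    have h1 : Φ (q n) ≤ |q n| ^ (-β) := hΦ _ (hqq₀ n hn)
    have h2 : ‖Bh (k / l + 2 * π * (n:ℝ) / Δx₀)‖ ^ 2 ≤ C ^ 2 :=
      pow_le_pow_left₀ (norm_nonneg _) (hBbd _) 2
    calc w n ≤ |q n| ^ (-β) * C ^ 2 :=
          mul_le_mul h1 h2 (by positivity) (Real.rpow_nonneg (abs_nonneg _) _)
      _ = C ^ 2 * |q n| ^ (-β) := mul_comm _ _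
  -- bound on the difference of truncated evolutions
  have hUdiff : ∀ x : ℝ, ‖Ubar Δt x - Ubar Δt k‖
      ≤ ∑ p ∈ Finset.range (α + 1), Δt ^ p / (Nat.factorial p) * (‖L x‖ ^ p + M ^ p) := by
    intro x
    rw [hUbar, hUbar, ← Finset.sum_sub_distrib]
    refine (norm_sum_le _ _).trans (Finset.sum_le_sum fun p _ => ?_)
    rw [div_sub_div_same, norm_div]
    have hfac : ‖((Nat.factorial p : ℕ) : ℂ)‖ = (Nat.factorial p : ℝ) := by
      simp [Complex.norm_natCast]
    rw [hfac]
    have hnum : ‖((Δt:ℂ) * L x) ^ p - ((Δt:ℂ) * L k) ^ p‖ ≤ Δt ^ p * (‖L x‖ ^ p + M ^ p) := by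
      calc ‖((Δt:ℂ) * L x) ^ p - ((Δt:ℂ) * L k) ^ p‖
          ≤ ‖((Δt:ℂ) * L x) ^ p‖ + ‖((Δt:ℂ) * L k) ^ p‖ := norm_sub_le _ _
        _ = (Δt * ‖L x‖) ^ p + (Δt * M) ^ p := by
            rw [norm_pow, norm_pow, norm_mul, norm_mul, Complex.norm_real,
              Real.norm_eq_abs, abs_of_pos hΔt, hMdef]
        _ = Δt ^ p * (‖L x‖ ^ p + M ^ p) := by rw [mul_pow, mul_pow]; ring
    have hfp : (0:ℝ) < (Nat.factorial p : ℝ) := by exact_mod_cast Nat.factorial_pos p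
    calc ‖((Δt:ℂ) * L x) ^ p - ((Δt:ℂ) * L k) ^ p‖ / (Nat.factorial p : ℝ)
        ≤ (Δt ^ p * (‖L x‖ ^ p + M ^ p)) / (Nat.factorial p : ℝ) := by
          gcongr
      _ = Δt ^ p / (Nat.factorial p : ℝ) * (‖L x‖ ^ p + M ^ p) := by ring
  -- the error terms
  set F : ℤ → ℂ := fun n => (Ubar Δt (q n) - Ubar Δt k) * ((w n : ℝ) : ℂ) with hFdef
  set A : ℝ := ∑ p ∈ Finset.range (α + 1),
      C ^ 2 * (1 + M ^ p) / (Nat.factorial p) * Δt ^ p * (Δx₀ / l) ^ (β - (p:ℝ) * γ)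
    with hAdef
  have hA0 : 0 ≤ A := by
    refine Finset.sum_nonneg fun p _ => ?_
    have hfp : (0:ℝ) < (Nat.factorial p : ℝ) := by exact_mod_cast Nat.factorial_pos p
    positivity
  have hF0 : F 0 = 0 := by simp [hFdef, hq0]
  have hFbound : ∀ n : ℤ, n ≠ 0 → ‖F n‖ ≤ A * g n := by
    intro n hn
    have hwn : ‖((w n : ℝ) : ℂ)‖ = w n := by
      rw [Complex.norm_real, Real.norm_eq_abs, abs_of_nonneg (hw_nonneg n)]
    have h0 : ‖F n‖ = ‖Ubar Δt (q n) - Ubar Δt k‖ * w n := by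
      rw [hFdef, norm_mul, hwn]
    have hsum0 : (0:ℝ) ≤ ∑ p ∈ Finset.range (α + 1),
        Δt ^ p / (Nat.factorial p) * (‖L (q n)‖ ^ p + M ^ p) := by
      refine Finset.sum_nonneg fun p _ => ?_
      have hfp : (0:ℝ) < (Nat.factorial p : ℝ) := by exact_mod_cast Nat.factorial_pos p
      positivity
    have step1 : ‖F n‖ ≤ (∑ p ∈ Finset.range (α + 1),
        Δt ^ p / (Nat.factorial p) * (‖L (q n)‖ ^ p + M ^ p)) * (C ^ 2 * |q n| ^ (-β)) := by
      rw [h0]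
      exact mul_le_mul (hUdiff (q n)) (hwb n hn) (hw_nonneg n) hsum0
    have step2 : (∑ p ∈ Finset.range (α + 1),
        Δt ^ p / (Nat.factorial p) * (‖L (q n)‖ ^ p + M ^ p)) * (C ^ 2 * |q n| ^ (-β))
        = ∑ p ∈ Finset.range (α + 1),
          Δt ^ p / (Nat.factorial p) * (‖L (q n)‖ ^ p + M ^ p) * (C ^ 2 * |q n| ^ (-β)) :=
      Finset.sum_mul _ _ _
    have step3 : ∀ p ∈ Finset.range (α + 1),
        Δt ^ p / (Nat.factorial p) * (‖L (q n)‖ ^ p + M ^ p) * (C ^ 2 * |q n| ^ (-β))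
        ≤ C ^ 2 * (1 + M ^ p) / (Nat.factorial p) * Δt ^ p
            * ((Δx₀ / l) ^ (β - (p:ℝ) * γ) * g n) := by
      intro p hp
      have hpα : p ≤ α := Nat.lt_succ_iff.mp (Finset.mem_range.mp hp)
      have hqn0 : (0:ℝ) < |q n| := hqpos n hn
      have hLp : ‖L (q n)‖ ^ p ≤ |q n| ^ ((p:ℝ) * γ) := by
        calc ‖L (q n)‖ ^ p ≤ (|q n| ^ γ) ^ p :=
              pow_le_pow_left₀ (norm_nonneg _) (hL _ (hqq₀ n hn)) p
          _ = |q n| ^ ((p:ℝ) * γ) := by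
              rw [← Real.rpow_natCast (|q n| ^ γ) p, ← Real.rpow_mul (abs_nonneg _),
                mul_comm]
      have hcomb : |q n| ^ ((p:ℝ) * γ) * |q n| ^ (-β) = |q n| ^ ((p:ℝ) * γ - β) := by
        rw [← Real.rpow_add hqn0]; ring_nf
      have t1 : ‖L (q n)‖ ^ p * |q n| ^ (-β)
          ≤ (Δx₀ / l) ^ (β - (p:ℝ) * γ) * g n := by
        calc ‖L (q n)‖ ^ p * |q n| ^ (-β)
            ≤ |q n| ^ ((p:ℝ) * γ) * |q n| ^ (-β) :=
              mul_le_mul_of_nonneg_right hLp (Real.rpow_nonneg (abs_nonneg _) _)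
          _ = |q n| ^ ((p:ℝ) * γ - β) := hcomb
          _ ≤ (Δx₀ / l) ^ (β - (p:ℝ) * γ) * g n := hXg n hn p hpα
      have t2 : M ^ p * |q n| ^ (-β)
          ≤ M ^ p * ((Δx₀ / l) ^ (β - (p:ℝ) * γ) * g n) :=
        mul_le_mul_of_nonneg_left (hXg0 n hn p hpα) (pow_nonneg hM0 p)
      have key : (‖L (q n)‖ ^ p + M ^ p) * |q n| ^ (-β)
          ≤ (1 + M ^ p) * ((Δx₀ / l) ^ (β - (p:ℝ) * γ) * g n) := by
        calc (‖L (q n)‖ ^ p + M ^ p) * |q n| ^ (-β)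
            = ‖L (q n)‖ ^ p * |q n| ^ (-β) + M ^ p * |q n| ^ (-β) := add_mul _ _ _
          _ ≤ (Δx₀ / l) ^ (β - (p:ℝ) * γ) * g n
              + M ^ p * ((Δx₀ / l) ^ (β - (p:ℝ) * γ) * g n) := add_le_add t1 t2
          _ = (1 + M ^ p) * ((Δx₀ / l) ^ (β - (p:ℝ) * γ) * g n) := by ring
      have hfp : (0:ℝ) < (Nat.factorial p : ℝ) := by exact_mod_cast Nat.factorial_pos p
      calc Δt ^ p / (Nat.factorial p) * (‖L (q n)‖ ^ p + M ^ p) * (C ^ 2 * |q n| ^ (-β))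
          = C ^ 2 * (Δt ^ p / (Nat.factorial p))
              * ((‖L (q n)‖ ^ p + M ^ p) * |q n| ^ (-β)) := by ring
        _ ≤ C ^ 2 * (Δt ^ p / (Nat.factorial p))
              * ((1 + M ^ p) * ((Δx₀ / l) ^ (β - (p:ℝ) * γ) * g n)) := by
            exact mul_le_mul_of_nonneg_left key (by positivity)
        _ = C ^ 2 * (1 + M ^ p) / (Nat.factorial p) * Δt ^ p
              * ((Δx₀ / l) ^ (β - (p:ℝ) * γ) * g n) := by ring
    calc ‖F n‖ ≤ ∑ p ∈ Finset.range (α + 1),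
          Δt ^ p / (Nat.factorial p) * (‖L (q n)‖ ^ p + M ^ p) * (C ^ 2 * |q n| ^ (-β)) :=
          step1.trans_eq step2
      _ ≤ ∑ p ∈ Finset.range (α + 1), C ^ 2 * (1 + M ^ p) / (Nat.factorial p) * Δt ^ p
            * ((Δx₀ / l) ^ (β - (p:ℝ) * γ) * g n) := Finset.sum_le_sum step3
      _ = A * g n := by
          rw [hAdef, Finset.sum_mul]
          exact Finset.sum_congr rfl fun p _ => by ring
  have hFall : ∀ n : ℤ, ‖F n‖ ≤ A * g n := by
    intro n
    by_cases hn : n = 0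
    · rw [hn, hF0, hgz, norm_zero, mul_zero]
    · exact hFbound n hn
  -- summability
  have hAgsum : Summable (fun n : ℤ => A * g n) := hgsum.mul_left A
  have hwsum : Summable w := by
    refine ifd_aux_summable (g := fun n => C ^ 2 * (Δx₀ / l) ^ (β - ((0:ℕ):ℝ) * γ) * g n)
      ((hgsum.mul_left _)) (fun n => by positivity) ?_
    intro n hn
    rw [Real.norm_eq_abs, abs_of_nonneg (hw_nonneg n)]
    calc w n ≤ C ^ 2 * |q n| ^ (-β) := hwb n hn
      _ ≤ C ^ 2 * ((Δx₀ / l) ^ (β - ((0:ℕ):ℝ) * γ) * g n) :=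
          mul_le_mul_of_nonneg_left (hXg0 n hn 0 (Nat.zero_le α)) (by positivity)
      _ = C ^ 2 * (Δx₀ / l) ^ (β - ((0:ℕ):ℝ) * γ) * g n := by ring
  have hFsum : Summable F :=
    ifd_aux_summable hAgsum (fun n => mul_nonneg hA0 (hg0 n)) (fun n hn => hFbound n hn)
  have hFnormsum : Summable (fun n => ‖F n‖) :=
    Summable.of_nonneg_of_le (fun n => norm_nonneg _) hFall hAgsum
  have hwsumC : Summable (fun n : ℤ => ((w n : ℝ) : ℂ)) := by
    refine Summable.of_norm_bounded hwsum ?_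
    intro n
    rw [Complex.norm_real, Real.norm_eq_abs, abs_of_nonneg (hw_nonneg n)]
  have hNsum : Summable (fun n : ℤ => Ubar Δt (q n) * ((w n : ℝ) : ℂ)) := by
    refine (hFsum.add (hwsumC.mul_left (Ubar Δt k))).congr fun n => ?_
    rw [hFdef]; ring
  -- denominator
  set Dr : ℝ := ∑' n, w n with hDrdef
  have hDr : D₀ ≤ Dr := le_trans hw0 (Summable.le_tsum hwsum 0 fun j _ => hw_nonneg j)
  have hDrpos : 0 < Dr := lt_of_lt_of_le hD₀ hDr
  have hDC : (∑' n : ℤ, ((w n : ℝ) : ℂ)) = ((Dr : ℝ) : ℂ) := (Complex.ofReal_tsum w).symm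
  have hDne : ((Dr : ℝ) : ℂ) ≠ 0 := by
    simpa using ne_of_gt hDrpos
  -- rewrite T
  have hTval : T Δt lam = (∑' n : ℤ, Ubar Δt (q n) * ((w n : ℝ) : ℂ))
      / (∑' n : ℤ, ((w n : ℝ) : ℂ)) := hT Δt lam
  have hTdiff : T Δt lam - Ubar Δt k = (∑' n : ℤ, F n) / ((Dr : ℝ) : ℂ) := by
    have hNsub : (∑' n : ℤ, Ubar Δt (q n) * ((w n : ℝ) : ℂ))
        - Ubar Δt k * ((Dr : ℝ) : ℂ) = ∑' n : ℤ, F n := by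
      rw [← hDC, ← tsum_mul_left, ← Summable.tsum_sub hNsum (hwsumC.mul_left (Ubar Δt k))]
      exact tsum_congr fun n => by rw [hFdef]; ring
    have h := sub_div (∑' n : ℤ, Ubar Δt (q n) * ((w n : ℝ) : ℂ))
      (Ubar Δt k * ((Dr : ℝ) : ℂ)) ((Dr : ℝ) : ℂ)
    rw [mul_div_assoc, div_self hDne, mul_one] at h
    rw [hTval, hDC, ← h, hNsub]
  -- final estimate
  rw [hTdiff, norm_div]
  have hDnorm : ‖((Dr : ℝ) : ℂ)‖ = Dr := by
    rw [Complex.norm_real, Real.norm_eq_abs, abs_of_pos hDrpos]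
  rw [hDnorm]
  have hnum : ‖∑' n : ℤ, F n‖ ≤ A * S := by
    calc ‖∑' n : ℤ, F n‖ ≤ ∑' n : ℤ, ‖F n‖ := norm_tsum_le_tsum_norm hFnormsum
      _ ≤ ∑' n : ℤ, A * g n := Summable.tsum_le_tsum hFall hFnormsum hAgsum
      _ = A * S := by rw [tsum_mul_left]
  have hmain : ‖∑' n : ℤ, F n‖ / Dr ≤ A * S / D₀ :=
    div_le_div₀ (by positivity) hnum hD₀ hDr
  refine hmain.trans ?_
  rw [hAdef, Finset.sum_mul, Finset.sum_div]
  refine le_of_eq (Finset.sum_congr rfl fun p _ => ?_)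
  ring
end
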